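/- arXiv:2406.07415 — 10 statements merged into one kernel-verified Lean document; each statement's English description precedes it below -/
import Mathlib

section
/- Let f : A → B be an F-equivalence of finitely generated F_p-algebras. Then there exist a ring homomorphism g : B → A and n ≥ 0 such that g ∘ f = F^n on A and f ∘ g = F^n on B, where F denotes the absolute Frobenius. -/
/-!
Present `B` as a quotient `π : P → B` of a polynomial ring `P` over `𝔽_p`. By F-surjectivity
a common `p^m`-th power of the generators lifts to `A`, giving `ψ : P → A` with
`f ∘ ψ = F^m ∘ π`. By F-injectivity `ψ` maps the finitely generated ideal `ker π` into the
nilradical, so some `F^l ∘ ψ` kills it and descends to `g₀ : B → A` with `f ∘ g₀ = F^(l+m)`.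
Then `g₀ ∘ f` and `F^(l+m)` differ by nilpotents, and since `A` is finitely generated one
more Frobenius power equalises them.
-/

open MvPolynomial Filter

theorem exists_forall_pow_pow_eq_zero {M ι : Type*} [MonoidWithZero M] [Finite ι] {p : ℕ}
    (hp : 1 < p) {x : ι → M} (hx : ∀ i, IsNilpotent (x i)) : ∃ n, ∀ i, x i ^ p ^ n = 0 := by
  refine (eventually_all.2 fun i => ?_).exists (f := atTop)
  obtain ⟨k, hk⟩ := hx i
  exact eventually_atTop.2
    ⟨k, fun n hn => pow_eq_zero_of_le (hn.trans (Nat.lt_pow_self hp).le) hk⟩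

theorem MvPolynomial.ringHom_ext_zmod {σ R : Type*} [Semiring R] {n : ℕ}
    {f g : MvPolynomial σ (ZMod n) →+* R} (h : ∀ i, f (X i) = g (X i)) : f = g :=
  ringHom_ext (RingHom.congr_fun (RingHom.ext_zmod (f.comp C) (g.comp C))) h

section Frobenius

variable {p : ℕ} [Fact p.Prime] {A B R : Type*} [CommRing A] [CommRing B] [CommRing R]

theorem exists_iterateFrobenius_comp_eq_of_isNilpotent_sub [Algebra (ZMod p) A]
    [Algebra.FiniteType (ZMod p) A] [CharP R p] (φ ψ : A →+* R)
    (h : ∀ a, IsNilpotent (φ a - ψ a)) :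
    ∃ s, (iterateFrobenius R p s).comp φ = (iterateFrobenius R p s).comp ψ := by
  obtain ⟨k, ρ, hρ⟩ := Algebra.FiniteType.iff_quotient_mvPolynomial''.mp ‹_›
  obtain ⟨s, hs⟩ := exists_forall_pow_pow_eq_zero (Fact.out : p.Prime).one_lt
    fun i : Fin k => h (ρ (X i))
  refine ⟨s, (RingHom.cancel_right (f := ρ.toRingHom) hρ).1 (ringHom_ext_zmod fun i => ?_)⟩
  simpa [iterateFrobenius_def, sub_pow_char_pow, sub_eq_zero] using hs i

theorem exists_comp_eq_iterateFrobenius_comp_of_ker_le {P : Type*} [CommRing P]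
    [IsNoetherianRing P] [CharP A p] (π : P →+* B) (hπ : Function.Surjective π) (ψ : P →+* A)
    (h : RingHom.ker π ≤ (nilradical A).comap ψ) :
    ∃ (l : ℕ) (g : B →+* A), g.comp π = (iterateFrobenius A p l).comp ψ := by
  obtain ⟨s, hs⟩ := IsNoetherian.noetherian (RingHom.ker π)
  obtain ⟨l, hl⟩ := exists_forall_pow_pow_eq_zero (x := fun r : s => ψ r)
    (Fact.out : p.Prime).one_lt fun r => h (hs ▸ Submodule.subset_span r.2)
  have hker : RingHom.ker π ≤ RingHom.ker ((iterateFrobenius A p l).comp ψ) :=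
    hs ▸ Ideal.span_le.2 fun r hr => hl ⟨r, hr⟩
  exact ⟨l, π.liftOfSurjective hπ ⟨_, hker⟩, π.liftOfSurjective_comp hπ _⟩

theorem exists_comp_eq_iterateFrobenius_comp_of_pow_mem_range {σ : Type*} [Finite σ]
    [Algebra (ZMod p) A] [CharP B p] (f : A →+* B) (π : MvPolynomial σ (ZMod p) →+* B)
    (hsurj : ∀ y : B, ∃ m : ℕ, y ^ p ^ m ∈ f.range) :
    ∃ (m : ℕ) (ψ : MvPolynomial σ (ZMod p) →+* A),
      f.comp ψ = (iterateFrobenius B p m).comp π := by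
  have hlift : ∀ y : B, ∀ᶠ m in atTop, y ^ p ^ m ∈ f.range := fun y => by
    obtain ⟨m, hm⟩ := hsurj y
    refine eventually_atTop.2 ⟨m, fun m' hm' => ?_⟩
    rw [← Nat.add_sub_cancel' hm', pow_add, pow_mul]
    exact pow_mem hm _
  obtain ⟨m, hm⟩ := (eventually_all.2 fun i => hlift (π (X i))).exists
  choose x hx using hm
  exact ⟨m, eval₂Hom (algebraMap (ZMod p) A) x,
    ringHom_ext_zmod fun i => by simpa [iterateFrobenius_def] using hx i⟩

theorem exists_comp_eq_iterateFrobenius_of_ker_le_nilradical [Algebra (ZMod p) A]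
    [Algebra (ZMod p) B] [Algebra.FiniteType (ZMod p) B] [CharP A p] [CharP B p] (f : A →+* B)
    (hinj : RingHom.ker f ≤ nilradical A) (hsurj : ∀ y : B, ∃ m : ℕ, y ^ p ^ m ∈ f.range) :
    ∃ (n : ℕ) (g : B →+* A), f.comp g = iterateFrobenius B p n := by
  obtain ⟨k, π, hπ⟩ := Algebra.FiniteType.iff_quotient_mvPolynomial''.mp ‹_›
  obtain ⟨m, ψ, hψ⟩ := exists_comp_eq_iterateFrobenius_comp_of_pow_mem_range f π.toRingHom hsurj
  obtain ⟨l, g, hg⟩ := exists_comp_eq_iterateFrobenius_comp_of_ker_le (p := p) π.toRingHom hπ ψ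
    fun r hr => hinj <| by
      rw [RingHom.mem_ker, ← RingHom.comp_apply, hψ, RingHom.comp_apply, RingHom.mem_ker.1 hr,
        map_zero]
  refine ⟨l + m, g, (RingHom.cancel_right (f := π.toRingHom) hπ).1 ?_⟩
  rw [RingHom.comp_assoc, hg, ← RingHom.comp_assoc, RingHom.iterateFrobenius_comm,
    RingHom.comp_assoc, hψ, ← RingHom.comp_assoc, iterateFrobenius_add]

end Frobenius

/-- An `F`-equivalence of finitely generated `𝔽_p`-algebras admits an "inverse up to
Frobenius": a ring map `g : B → A` with `g ∘ f = F^n` and `f ∘ g = F^n`. -/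
theorem stmt1 (p : ℕ) [Fact p.Prime] {A B : Type*} [CommRing A] [CommRing B]
    [Algebra (ZMod p) A] [Algebra (ZMod p) B]
    [Algebra.FiniteType (ZMod p) A] [Algebra.FiniteType (ZMod p) B]
    (f : A →+* B)
    (hinj : ∀ x : A, f x = 0 → ∃ m : ℕ, x ^ p ^ m = 0)
    (hsurj : ∀ y : B, ∃ (m : ℕ) (x : A), f x = y ^ p ^ m) :
    ∃ (g : B →+* A) (n : ℕ),
      (∀ a : A, g (f a) = a ^ p ^ n) ∧ (∀ b : B, f (g b) = b ^ p ^ n) := by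
  -- The zero ring has no characteristic `p`, so it is set aside first.
  rcases subsingleton_or_nontrivial B with hB | hB
  · obtain ⟨m, hm⟩ := hinj 1 (Subsingleton.elim _ _)
    have : Subsingleton A := subsingleton_of_zero_eq_one (by simpa using hm.symm)
    let : Unique A := uniqueOfSubsingleton 0
    let : Unique B := uniqueOfSubsingleton 0
    exact ⟨RingEquiv.ofUnique.toRingHom, 0, fun _ => Subsingleton.elim _ _,
      fun _ => Subsingleton.elim _ _⟩
  have := f.domain_nontrivial
  have : CharP A p := charP_of_injective_algebraMap (algebraMap (ZMod p) A).injective p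
  have : CharP B p := charP_of_injective_algebraMap (algebraMap (ZMod p) B).injective p
  have hker : RingHom.ker f ≤ nilradical A := fun a ha =>
    let ⟨m, hm⟩ := hinj a ha; ⟨p ^ m, hm⟩
  have hrange : ∀ y : B, ∃ m : ℕ, y ^ p ^ m ∈ f.range := fun y =>
    let ⟨m, x, hx⟩ := hsurj y; ⟨m, x, hx⟩
  obtain ⟨n, g₀, hg₀⟩ := exists_comp_eq_iterateFrobenius_of_ker_le_nilradical f hker hrange
  obtain ⟨s, hs⟩ := exists_iterateFrobenius_comp_eq_of_isNilpotent_sub (g₀.comp f)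
    (iterateFrobenius A p n) fun a => hker <| by
      rw [RingHom.mem_ker, map_sub, RingHom.comp_apply, RingHom.map_iterateFrobenius,
        ← RingHom.comp_apply f g₀, hg₀, sub_self]
  refine ⟨(iterateFrobenius A p s).comp g₀, s + n, fun a => ?_, fun b => ?_⟩
  · rw [← iterateFrobenius_def, iterateFrobenius_add_apply]
    exact congr($hs a)
  · rw [← iterateFrobenius_def, iterateFrobenius_add_apply, ← hg₀]
    exact RingHom.map_iterateFrobenius f p (g₀ b) s
end

section
/- Let f : A → B be an F-surjective homomorphism of F_p-algebras, let A → A' be any homomorphism of F_p-algebras, and let f' : A' → A' ⊗_A B be the base change of f. Then f' is F-surjective. -/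
/-- `F`-surjectivity is preserved by base change: if `A → B` (the structure map) is
`F`-surjective, then so is `A' → A' ⊗[A] B`, `x ↦ x ⊗ 1`. -/
theorem stmt2 (p : ℕ) [Fact p.Prime] (A A' B : Type*) [CommRing A] [CommRing A'] [CommRing B]
    [CharP A p] [Algebra A A'] [Algebra A B]
    (hsurj : ∀ y : B, ∃ (m : ℕ) (x : A), algebraMap A B x = y ^ p ^ m) :
    ∀ y : TensorProduct A A' B, ∃ (m : ℕ) (x : A'),
      (Algebra.TensorProduct.includeLeftRingHom : A' →+* TensorProduct A A' B) x = y ^ p ^ m := by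
  set T := TensorProduct A A' B
  cases subsingleton_or_nontrivial T with
  | inl h =>
    intro y
    exact ⟨0, 0, Subsingleton.elim _ _⟩
  | inr h =>
    have hp0 : (p : T) = 0 := by
      have : (algebraMap A T) (p : A) = (p : T) := map_natCast _ p
      rw [← this, CharP.cast_eq_zero A p, map_zero]
    haveI : CharP T p := (CharP.charP_iff_prime_eq_zero Fact.out).2 hp0
    haveI : ExpChar T p := .prime Fact.out
    intro y
    induction y using TensorProduct.induction_on with
    | zero =>
      exact ⟨0, 0, by simp⟩
    | tmul a' b =>
      obtain ⟨m, x, hx⟩ := hsurj b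
      refine ⟨m, algebraMap A A' x * a' ^ p ^ m, ?_⟩
      rw [Algebra.TensorProduct.tmul_pow, ← hx]
      show (algebraMap A A' x * a' ^ p ^ m) ⊗ₜ[A] (1 : B) = _
      rw [← Algebra.smul_def, Algebra.algebraMap_eq_smul_one, TensorProduct.smul_tmul]
    | add y z hy hz =>
      obtain ⟨m1, x1, hx1⟩ := hy
      obtain ⟨m2, x2, hx2⟩ := hz
      refine ⟨max m1 m2, x1 ^ p ^ (max m1 m2 - m1) + x2 ^ p ^ (max m1 m2 - m2), ?_⟩
      rw [add_pow_expChar_pow, map_add, map_pow, map_pow, hx1, hx2,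
        ← pow_mul, ← pow_mul, ← pow_add, ← pow_add,
        Nat.add_sub_cancel' (le_max_left m1 m2), Nat.add_sub_cancel' (le_max_right m1 m2)]
end

section
/- Let f : A → B be an F-equivalence of F_p-algebras, let A → A' be any homomorphism of F_p-algebras, and let f' : A' → A' ⊗_A B be the base change of f. Then f' is an F-equivalence. -/
/-!
An `F`-equivalence is exactly a `p`-radical ring map (`IsPRadical`). After raising
to a `p`-power, every pure tensor `a' ⊗ b` comes from `A'` because `b` does, and sums follow by
additivity of Frobenius. For the kernel, map `A'` into its perfect closure `M`: since `M` is
perfect, `A → A' → M` extends along the `p`-radical map `A → B`, so `A' → M` factors through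
`A' ⊗[A] B`, and the kernel of `A' → M` consists of the elements killed by a power of Frobenius.
-/

open scoped TensorProduct
open Algebra.TensorProduct

theorem charP_of_ringHom_of_nontrivial {K L : Type*} [NonAssocRing K] [NonAssocRing L]
    [Nontrivial L] (p : ℕ) [Fact p.Prime] [CharP K p] (f : K →+* L) : CharP L p :=
  (CharP.charP_iff_prime_eq_zero Fact.out).2 (by rw [← map_natCast f, CharP.cast_eq_zero, map_zero])

theorem IsPRadical.charP {K L : Type*} [CommRing K] [CommRing L] (p : ℕ) [Fact p.Prime]
    [CharP K p] (i : K →+* L) [IsPRadical i p] : CharP L p := by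
  have : Nontrivial K := CharP.nontrivial_of_char_ne_one (Fact.out : p.Prime).ne_one
  have : Nontrivial L := by
    by_contra h
    have : Subsingleton L := not_nontrivial_iff_subsingleton.1 h
    obtain ⟨n, hn⟩ := mem_pNilradical.1 <| IsPRadical.ker_le i p (Subsingleton.elim (i 1) 0)
    exact one_ne_zero (one_pow (M := K) _ ▸ hn)
  exact charP_of_ringHom_of_nontrivial p i

section BaseChange

variable {A A' B : Type*} [CommRing A] [CommRing A'] [CommRing B] [Algebra A A'] [Algebra A B]
  (p : ℕ) [IsPRadical (algebraMap A B) p]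

theorem exists_includeLeftRingHom_eq_pow [ExpChar (A' ⊗[A] B) p] (y : A' ⊗[A] B) :
    ∃ (n : ℕ) (x : A'), (includeLeftRingHom : A' →+* A' ⊗[A] B) x = y ^ p ^ n := by
  induction y using TensorProduct.induction_on with
  | zero => exact ⟨0, 0, by simp⟩
  | tmul a' b =>
    obtain ⟨n, a, ha⟩ := IsPRadical.pow_mem (algebraMap A B) p b
    refine ⟨n, a • a' ^ p ^ n, ?_⟩
    rw [tmul_pow, ← ha, includeLeftRingHom_apply, TensorProduct.smul_tmul,
      Algebra.algebraMap_eq_smul_one]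
  | add y₁ y₂ ih₁ ih₂ =>
    obtain ⟨n₁, x₁, h₁⟩ := ih₁
    obtain ⟨n₂, x₂, h₂⟩ := ih₂
    refine ⟨n₁ + n₂, x₁ ^ p ^ n₂ + x₂ ^ p ^ n₁, ?_⟩
    rw [map_add, map_pow, map_pow, h₁, h₂, add_pow_expChar_pow, ← pow_mul, ← pow_mul,
      ← pow_add, ← pow_add, add_comm n₂]

theorem ker_includeLeftRingHom_le_ker [ExpChar A p] [ExpChar B p] {M : Type*} [CommRing M]
    [ExpChar M p] [PerfectRing M p] (g : A' →+* M) :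
    RingHom.ker (includeLeftRingHom : A' →+* A' ⊗[A] B) ≤ RingHom.ker g := by
  let _ : Algebra A M := (g.comp (algebraMap A A')).toAlgebra
  let gA' : A' →ₐ[A] M := { g with commutes' := fun _ ↦ rfl }
  let gB : B →ₐ[A] M :=
    { PerfectRing.lift (algebraMap A B) (algebraMap A M) p with
      commutes' := PerfectRing.lift_comp_apply _ _ p }
  have hg : (lift gA' gB fun _ _ ↦ .all _ _).toRingHom.comp includeLeftRingHom = g := by
    ext x
    simp [gA']
  rw [← hg, ← RingHom.comap_ker]
  exact Ideal.ker_le_comap _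

theorem IsPRadical.includeLeftRingHom [Fact p.Prime] [CharP A p] :
    IsPRadical (includeLeftRingHom : A' →+* A' ⊗[A] B) p where
  pow_mem' y := by
    rcases subsingleton_or_nontrivial (A' ⊗[A] B) with _ | _
    · exact ⟨0, 0, Subsingleton.elim _ _⟩
    · have := charP_of_ringHom_of_nontrivial p (algebraMap A (A' ⊗[A] B))
      exact exists_includeLeftRingHom_eq_pow p y
  ker_le' := by
    rcases subsingleton_or_nontrivial A' with _ | _
    · intro x _
      exact Subsingleton.elim x 0 ▸ Ideal.zero_mem _
    · have := charP_of_ringHom_of_nontrivial p (algebraMap A A')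
      have := IsPRadical.charP p (algebraMap A B)
      exact (ker_includeLeftRingHom_le_ker p (PerfectClosure.of A' p)).trans
        (IsPRadical.ker_le _ p)

end BaseChange

/-- `F`-equivalence is preserved by base change: if the structure map `A → B` is an
`F`-equivalence, then so is `A' → A' ⊗[A] B`, `x ↦ x ⊗ 1`. -/
theorem stmt3 (p : ℕ) [Fact p.Prime] (A A' B : Type*) [CommRing A] [CommRing A'] [CommRing B]
    [CharP A p] [Algebra A A'] [Algebra A B]
    (hinj : ∀ x : A, algebraMap A B x = 0 → ∃ m : ℕ, x ^ p ^ m = 0)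
    (hsurj : ∀ y : B, ∃ (m : ℕ) (x : A), algebraMap A B x = y ^ p ^ m) :
    (∀ x : A', (Algebra.TensorProduct.includeLeftRingHom : A' →+* TensorProduct A A' B) x = 0 →
      ∃ m : ℕ, x ^ p ^ m = 0) ∧
    (∀ y : TensorProduct A A' B, ∃ (m : ℕ) (x : A'),
      (Algebra.TensorProduct.includeLeftRingHom : A' →+* TensorProduct A A' B) x = y ^ p ^ m) := by
  have : IsPRadical (algebraMap A B) p := ⟨hsurj, fun x hx ↦ mem_pNilradical.2 (hinj x hx)⟩
  obtain ⟨hpow, hker⟩ := IsPRadical.includeLeftRingHom (A := A) (A' := A') (B := B) p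
  exact ⟨fun x hx ↦ mem_pNilradical.1 (hker hx), hpow⟩
end

section
/- Let A be a finitely generated algebra over an algebraically closed field K and let M be a finitely generated A-module such that M/(ker x)M = 0 for every K-algebra homomorphism x : A → K. Then M = 0. -/
/-!
By the weak Nullstellensatz every maximal ideal of `A` is the kernel of a `K`-point, so the
hypothesis says `m • M = M` for every maximal ideal `m`. By Nakayama's lemma this produces an
`r ≡ 1 (mod m)` killing `M`; if `M ≠ 0`, choosing `m` above the annihilator of `M` puts `r` in `m`
as well, so `1 ∈ m`.
-/

theorem Module.subsingleton_of_forall_isMaximal_smul_top_eq_top {R M : Type*} [CommRing R]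
    [AddCommGroup M] [Module R M] [Module.Finite R M]
    (h : ∀ m : Ideal R, m.IsMaximal → m • (⊤ : Submodule R M) = ⊤) : Subsingleton M := by
  rw [← Module.annihilator_eq_top_iff (R := R)]
  by_contra hann
  obtain ⟨m, hm, hle⟩ := Ideal.exists_le_maximal _ hann
  obtain ⟨r, hr1, hr0⟩ := Submodule.exists_sub_one_mem_and_smul_eq_zero_of_fg_of_le_smul m
    (⊤ : Submodule R M) Module.Finite.fg_top (h m hm).ge
  have hrm : r ∈ m := hle <| Module.mem_annihilator.mpr fun n => hr0 n Submodule.mem_top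
  exact hm.ne_top <| (Ideal.eq_top_iff_one m).mpr <| by simpa using m.sub_mem hrm hr1

theorem Ideal.exists_algHom_ker_eq_of_isMaximal (K : Type*) {A : Type*} [Field K] [IsAlgClosed K]
    [CommRing A] [Algebra K A] [Algebra.FiniteType K A] (m : Ideal A) [m.IsMaximal] :
    ∃ x : A →ₐ[K] K, RingHom.ker x.toRingHom = m := by
  let := Ideal.Quotient.field m
  have := finite_of_finite_type_of_isJacobsonRing K (A ⧸ m)
  let φ : A ⧸ m →ₐ[K] K := IsAlgClosed.lift
  refine ⟨φ.comp (Ideal.Quotient.mkₐ K m), ?_⟩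
  exact (RingHom.ker_comp_of_injective _ φ.toRingHom.injective).trans Ideal.mk_ker

/-- Over an algebraically closed field `K`, a finitely generated module `M` over a finitely
generated `K`-algebra `A` with `M/(ker x)M = 0` for all `K`-points `x : A → K` is zero. -/
theorem stmt12 (K : Type*) [Field K] [IsAlgClosed K] (A : Type*) [CommRing A] [Algebra K A]
    [Algebra.FiniteType K A] (M : Type*) [AddCommGroup M] [Module A M] [Module.Finite A M]
    (h : ∀ x : A →ₐ[K] K, (RingHom.ker x.toRingHom) • (⊤ : Submodule A M) = ⊤) :
    Subsingleton M := by
  refine Module.subsingleton_of_forall_isMaximal_smul_top_eq_top (R := A) fun m _ => ?_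
  obtain ⟨x, hx⟩ := m.exists_algHom_ker_eq_of_isMaximal K
  exact hx ▸ h x
end

section
/- Let K be a field of characteristic p > 0 with [K : K^p] finite, and let L/K be a finite field extension. Then [L : L^p] = [K : K^p]. -/
open Module

/-- If `K` is a field of characteristic `p` with `[K : K^p]` finite and `L/K` is a finite
extension, then `[L : L^p] = [K : K^p]`. -/
theorem stmt13 (p : ℕ) [Fact p.Prime] (K L : Type*) [Field K] [Field L]
    [CharP K p] [CharP L p] [Algebra K L] [FiniteDimensional K L]
    [FiniteDimensional (frobenius K p).fieldRange K] :
    Module.finrank (frobenius L p).fieldRange L =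
      Module.finrank (frobenius K p).fieldRange K := by
  set K' := (frobenius K p).fieldRange with hK'
  set L' := (frobenius L p).fieldRange with hL'
  -- the map K' → L'
  have hmem : ∀ x : K', (algebraMap K L) (x : K) ∈ L' := by
    rintro ⟨_, y, rfl⟩
    exact ⟨algebraMap K L y, by simp [frobenius_def, map_pow]⟩
  let f : K' →+* L' := ((algebraMap K L).comp K'.subtype).codRestrict L'.toSubring hmem
  letI instKL' : Algebra K' L' := f.toAlgebra
  haveI : IsScalarTower K' L' L := by
    refine IsScalarTower.mk fun x y z => ?_
    show ((f x * y : L') : L) * z = (x : K) • (((y : L)) * z)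
    rw [Algebra.smul_def]
    push_cast
    have : ((f x : L') : L) = algebraMap K L (x : K) := rfl
    rw [this, mul_assoc]
  -- Frobenius equivalences
  have hKsurj : Function.Surjective (frobenius K p).rangeRestrictField := by
    rintro ⟨_, y, rfl⟩; exact ⟨y, rfl⟩
  have hLsurj : Function.Surjective (frobenius L p).rangeRestrictField := by
    rintro ⟨_, y, rfl⟩; exact ⟨y, rfl⟩
  let eK : K ≃+* K' := RingEquiv.ofBijective (frobenius K p).rangeRestrictField
    ⟨fun a b h => (frobenius K p).injective (congrArg Subtype.val h), hKsurj⟩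
  let eL : L ≃+* L' := RingEquiv.ofBijective (frobenius L p).rangeRestrictField
    ⟨fun a b h => (frobenius L p).injective (congrArg Subtype.val h), hLsurj⟩
  -- finrank K' L' = finrank K L
  have hrank : Module.rank K L = Module.rank K' L' := by
    refine Algebra.rank_eq_of_equiv_equiv eK eL ?_
    ext x
    show ((algebraMap K' L') (eK x) : L) = ((eL (algebraMap K L x) : L') : L)
    have h1 : ((algebraMap K' L') (eK x) : L) = algebraMap K L ((eK x : K)) := rfl
    have h2 : ((eL (algebraMap K L x) : L') : L) = frobenius L p (algebraMap K L x) := rfl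
    have h3 : (eK x : K) = frobenius K p x := rfl
    rw [h1, h2, h3]
    simp [frobenius_def, map_pow]
  have hfr : finrank K L = finrank K' L' := by
    simp only [finrank, hrank]
  -- tower laws
  have h1 : finrank K' K * finrank K L = finrank K' L := finrank_mul_finrank K' K L
  have h2 : finrank K' L' * finrank L' L = finrank K' L := finrank_mul_finrank K' L' L
  have hpos : 0 < finrank K L := finrank_pos
  rw [← hfr] at h2
  have : finrank K L * finrank L' L = finrank K L * finrank K' K := by
    rw [h2, ← h1, mul_comm]
  exact Nat.eq_of_mul_eq_mul_left hpos this
end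

section
/- Let K be a field of characteristic p > 0 with [K : K^p] = c finite, and let L/K be an algebraic extension. Then [L : L^p] ≤ c. -/
/-!
For a finite extension `M / K`, compute the rank of `M` over `K^p` along the towers
`K^p ⊆ K ⊆ M` and `K^p ⊆ M^p ⊆ M`. Frobenius maps `M / K` isomorphically onto `M^p / K^p`, so
`[K : K^p] [M : K] = [M : K] [M : M^p]`, and cancelling the finite nonzero `[M : K]` gives
`[M : M^p] = [K : K^p]`. For algebraic `L / K`, a finite `L^p`-independent subset of `L` remains
independent over `M^p` in the finite extension `M` it generates over `K`.
-/

open Cardinal Module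

universe u v

section Frobenius

variable (p : ℕ)

theorem RingHom.map_fieldRange_frobenius {K M : Type*} [Field K] [Field M] [ExpChar K p]
    [ExpChar M p] (f : K →+* M) :
    f.fieldRange.map (frobenius M p) = (frobenius K p).fieldRange.map f := by
  rw [RingHom.map_fieldRange, RingHom.map_fieldRange]
  congr 1
  ext x
  exact (f.map_frobenius p x).symm

theorem RingHom.map_frobenius_fieldRange_le {K M : Type*} [Field K] [Field M] [ExpChar K p]
    [ExpChar M p] (f : K →+* M) :
    (frobenius K p).fieldRange.map f ≤ (frobenius M p).fieldRange := by
  rw [← f.map_fieldRange_frobenius p]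
  rintro _ ⟨x, -, rfl⟩
  exact ⟨x, rfl⟩

theorem lift_rank_frobenius_fieldRange_of_finiteDimensional (K : Type u) (M : Type v) [Field K]
    [Field M] [ExpChar K p] [ExpChar M p] [Algebra K M] [FiniteDimensional K M] :
    lift.{u} (Module.rank (frobenius M p).fieldRange M) =
      lift.{v} (Module.rank (frobenius K p).fieldRange K) := by
  set A := (⊥ : IntermediateField K M).toSubfield
  set A₀ := A.map (frobenius M p) with hA₀_def
  have hA : A = (algebraMap K M).fieldRange := IntermediateField.bot_toSubfield
  have hA₀ : A₀ = (frobenius K p).fieldRange.map (algebraMap K M) := by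
    rw [hA₀_def, hA, RingHom.map_fieldRange_frobenius]
  have hA₀A : A₀ ≤ A := by
    rw [hA₀, hA]
    rintro _ ⟨x, -, rfl⟩
    exact ⟨x, rfl⟩
  have hA₀B : A₀ ≤ (frobenius M p).fieldRange := by
    rintro _ ⟨x, -, rfl⟩
    exact ⟨x, rfl⟩
  have hbase : lift.{u} (Subfield.relrank A₀ A) =
      lift.{v} (Module.rank (frobenius K p).fieldRange K) := by
    rw [hA₀, hA, (algebraMap K M).fieldRange_eq_map, Subfield.lift_relrank_map_map,
      Subfield.relrank_top_right]
  have hdeg : Subfield.relrank A ⊤ = finrank K M := by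
    change IntermediateField.relrank ⊥ ⊤ = _
    rw [IntermediateField.relrank_bot_left, IntermediateField.rank_top', finrank_eq_rank]
  have hdeg' : Subfield.relrank A₀ (frobenius M p).fieldRange = finrank K M := by
    rw [(frobenius M p).fieldRange_eq_map, Subfield.relrank_map_map, hdeg]
  have htower : (finrank K M : Cardinal) * Subfield.relrank (frobenius M p).fieldRange ⊤ =
      finrank K M * Subfield.relrank A₀ A :=
    calc _ = Subfield.relrank A₀ ⊤ := by rw [← hdeg', Subfield.relrank_mul_relrank hA₀B le_top]
      _ = _ := by rw [← hdeg, mul_comm, Subfield.relrank_mul_relrank hA₀A le_top]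
  rw [natCast_mul_inj finrank_pos.ne'] at htower
  rw [← hbase, ← htower, Subfield.relrank_top_right]

end Frobenius

theorem LinearIndependent.of_comp_of_map_le {M L : Type*} [Field M] [Field L] (f : M →+* L)
    {S : Subfield M} {T : Subfield L} (hST : S.map f ≤ T) {ι : Type*} {v : ι → M}
    (hv : LinearIndependent T (f ∘ v)) : LinearIndependent S v := by
  rw [linearIndependent_iff'] at hv ⊢
  intro s g hg i hi
  let g' : ι → T := fun j => ⟨f (g j), hST ⟨g j, (g j).2, rfl⟩⟩
  have hg' : ∑ j ∈ s, g' j • f (v j) = 0 := by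
    simpa only [map_sum, map_zero, Subfield.smul_def, smul_eq_mul, map_mul] using congrArg f hg
  exact Subtype.ext <| (map_eq_zero f).mp <| congrArg Subtype.val (hv s g' hg' i hi)

/-- If `K` is a field of characteristic `p` with `[K : K^p] = c` finite and `L/K` is an
algebraic extension, then `[L : L^p] ≤ c`. -/
theorem stmt14 (p : ℕ) [Fact p.Prime] (K L : Type*) [Field K] [Field L]
    [CharP K p] [CharP L p] [Algebra K L] [Algebra.IsAlgebraic K L] (c : ℕ)
    (hc : Module.rank (frobenius K p).fieldRange K = c) :
    Module.rank (frobenius L p).fieldRange L ≤ c := by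
  refine rank_le fun s hs => ?_
  let M := IntermediateField.adjoin K (s : Set L)
  have : FiniteDimensional K M := IntermediateField.finiteDimensional_adjoin fun x _ =>
    (Algebra.IsAlgebraic.isAlgebraic x).isIntegral
  have hM : Module.rank (frobenius M p).fieldRange M = c := by
    have := lift_rank_frobenius_fieldRange_of_finiteDimensional p K M
    rwa [hc, lift_natCast, lift_eq_nat_iff] at this
  let v : s → M := fun x => ⟨x, IntermediateField.subset_adjoin K _ x.2⟩
  have hv : LinearIndependent (frobenius M p).fieldRange v :=
    hs.of_comp_of_map_le (algebraMap M L) ((algebraMap M L).map_frobenius_fieldRange_le p)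
  simpa [hM] using hv.cardinal_le_rank
end

section
/- Let K be a field of characteristic p > 0 with c = [K : K^p] finite, let q = p^k, and let d ≥ 1. If L/K is an algebraic extension and M/L is a field extension of degree at most d, then the extension M^{1/q}/L has degree at most d·c^k, where M^{1/q} is the field of q-th roots of elements of M inside a fixed algebraic closure. -/
/-!
The `q`-th power map embeds `N` into `M`, semilinearly along `L ≃ L^q`, so
`[N : L] ≤ [M : L^q] = [L : L^q] [M : L]`; transporting the chain `L ⊇ L^p ⊇ ⋯ ⊇ L^q`
along Frobenius gives `[L : L^q] = [L : L^p]^k`. Finally `[L : L^p] ≤ [K : K^p]`: a finite set `s`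
independent over `L^p` lies in `E = K(s)`, finite over `K`, and the two factorizations
`[E : K^p] = [E : E^p] [E^p : K^p] = [E : K] [K : K^p]` with `[E^p : K^p] = [E : K]` give
`[E : E^p] = [K : K^p]`.
-/

open Cardinal Module

universe u v w

namespace Subfield

variable {Ω : Type u} [Field Ω] (p : ℕ) [ExpChar Ω p]

theorem relrank_ne_zero (A B : Subfield Ω) : relrank A B ≠ 0 :=
  rank_pos.ne'

theorem linearIndependent_of_le {A C : Subfield Ω} (h : A ≤ C) {ι : Type*} {v : ι → Ω}
    (hv : LinearIndependent C v) : LinearIndependent A v := by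
  let : Algebra A C := (inclusion h).toAlgebra
  have : IsScalarTower A C Ω := IsScalarTower.of_algebraMap_eq' rfl
  exact hv.restrict_scalars' A

theorem card_le_relrank_of_linearIndependent {A B : Subfield Ω} (h : A ≤ B) {s : Finset Ω}
    (hsB : (s : Set Ω) ⊆ B) (hs : LinearIndependent A (fun i : s => (i : Ω))) :
    (s.card : Cardinal) ≤ relrank A B := by
  rw [relrank_eq_rank_of_le h]
  let v : s → extendScalars h := fun i => ⟨i, hsB i.2⟩
  have hv : LinearIndependent A v :=
    LinearIndependent.of_comp (extendScalars h).val.toLinearMap hs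
  simpa using hv.cardinal_le_rank

theorem map_frobenius_le (A : Subfield Ω) : A.map (frobenius Ω p) ≤ A := by
  rintro _ ⟨x, hx, rfl⟩
  exact pow_mem hx p

theorem relrank_map_frobenius_mul_relrank {A B : Subfield Ω} (h : A ≤ B) :
    relrank (A.map (frobenius Ω p)) A * relrank A B =
      relrank A B * relrank (B.map (frobenius Ω p)) B := by
  rw [relrank_mul_relrank (map_frobenius_le p A) h, ← relrank_map_map A B (frobenius Ω p),
    relrank_mul_relrank ((gc_map_comap _).monotone_l h) (map_frobenius_le p B)]

theorem relrank_map_frobenius_eq_of_lt_aleph0 {A B : Subfield Ω} (h : A ≤ B)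
    (hfin : relrank A B < ℵ₀) :
    relrank (B.map (frobenius Ω p)) B = relrank (A.map (frobenius Ω p)) A := by
  obtain ⟨n, hn⟩ := lt_aleph0.mp hfin
  have hn0 : n ≠ 0 := by
    rintro rfl
    exact relrank_ne_zero A B (by simpa using hn)
  have key := relrank_map_frobenius_mul_relrank p h
  rw [hn, mul_comm] at key
  exact ((natCast_mul_inj hn0).mp key).symm

theorem lift_relrank_map_frobenius_fieldRange {K : Type v} [Field K] [ExpChar K p]
    (f : K →+* Ω) :
    lift.{v} (relrank (f.fieldRange.map (frobenius Ω p)) f.fieldRange) =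
      lift.{u} (Module.rank (frobenius K p).fieldRange K) := by
  have hcomm : (frobenius Ω p).comp f = f.comp (frobenius K p) :=
    RingHom.ext fun x => (map_pow f x p).symm
  rw [RingHom.map_fieldRange, hcomm, ← RingHom.map_fieldRange, f.fieldRange_eq_map,
    lift_relrank_map_map, relrank_top_right]

theorem relrank_iterateFrobenius_fieldRange (k : ℕ) :
    relrank (iterateFrobenius Ω p k).fieldRange ⊤ =
      relrank (frobenius Ω p).fieldRange ⊤ ^ k := by
  induction k with
  | zero =>
    rw [pow_zero, relrank_eq_one_iff, iterateFrobenius_zero]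
    exact fun x _ => ⟨x, rfl⟩
  | succ k ih =>
    set A := (iterateFrobenius Ω p k).fieldRange
    have hsucc : (iterateFrobenius Ω p (k + 1)).fieldRange = A.map (frobenius Ω p) := by
      rw [RingHom.map_fieldRange, ← iterateFrobenius_one, ← iterateFrobenius_add, add_comm]
    calc relrank (iterateFrobenius Ω p (k + 1)).fieldRange ⊤
        = relrank (A.map (frobenius Ω p)) ((⊤ : Subfield Ω).map (frobenius Ω p)) *
            relrank (frobenius Ω p).fieldRange ⊤ := by
          rw [hsucc, RingHom.fieldRange_eq_map (frobenius Ω p),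
            relrank_mul_relrank ((gc_map_comap _).monotone_l le_top) le_top]
      _ = relrank (frobenius Ω p).fieldRange ⊤ ^ (k + 1) := by
          rw [relrank_map_map, ih, pow_succ]

end Subfield

open Subfield in
theorem rank_frobenius_fieldRange_le_of_isAlgebraic (p : ℕ) (K : Type v) (L : Type u)
    [Field K] [Field L] [ExpChar K p] [ExpChar L p] [Algebra K L] [Algebra.IsAlgebraic K L]
    {c : ℕ} (hc : Module.rank (frobenius K p).fieldRange K = c) :
    Module.rank (frobenius L p).fieldRange L ≤ c := by
  refine rank_le fun s hs => ?_
  let E' := IntermediateField.adjoin K (s : Set L)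
  let K' := (⊥ : IntermediateField K L).toSubfield
  let E := E'.toSubfield
  have hK'E : K' ≤ E := fun _ hx => (bot_le : ⊥ ≤ E') hx
  have hfin : relrank K' E < ℵ₀ := by
    have : FiniteDimensional K E' := IntermediateField.finiteDimensional_adjoin
      fun x _ => (Algebra.IsAlgebraic.isAlgebraic x).isIntegral
    exact (IntermediateField.relrank_bot_left E').trans_lt (rank_lt_aleph0 K E')
  have hE : relrank (E.map (frobenius L p)) E = c := by
    rw [relrank_map_frobenius_eq_of_lt_aleph0 p hK'E hfin]
    have hK' := lift_relrank_map_frobenius_fieldRange p (algebraMap K L)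
    rw [← IntermediateField.bot_toSubfield, hc, lift_natCast] at hK'
    exact lift_eq_nat_iff.mp hK'
  have hEp : E.map (frobenius L p) ≤ (frobenius L p).fieldRange := by
    rw [RingHom.fieldRange_eq_map]
    exact (gc_map_comap _).monotone_l le_top
  have hcard := card_le_relrank_of_linearIndependent (map_frobenius_le p E)
    (IntermediateField.subset_adjoin K (s : Set L)) (linearIndependent_of_le hEp hs)
  exact_mod_cast hE ▸ hcard

theorem lift_rank_le_lift_rank_fieldRange {L : Type u} {M : Type v} {N : Type w} [Field L]
    [Field M] [Field N] [Algebra L M] [Algebra L N] (f : N →+* M) (φ : L →+* L)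
    (h : f.comp (algebraMap L N) = (algebraMap L M).comp φ) :
    lift.{v} (Module.rank L N) ≤ lift.{w} (Module.rank φ.fieldRange M) := by
  refine lift_rank_le_of_surjective_injective φ.rangeRestrictField f.toAddMonoidHom
    φ.rangeRestrictField_bijective.2 f.injective fun r x => ?_
  simp only [RingHom.toAddMonoidHom_eq_coe, AddMonoidHom.coe_coe, Algebra.smul_def, map_mul]
  rw [← RingHom.comp_apply, h]
  rfl

theorem exists_algebraMap_comp_eq_iterateFrobenius {M : Type v} {N : Type w} [Field M]
    [Field N] [Algebra M N] (p k : ℕ) [ExpChar N p]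
    (hN : ∀ x : N, ∃ m : M, algebraMap M N m = x ^ p ^ k) :
    ∃ F : N →+* M, (algebraMap M N).comp F = iterateFrobenius N p k := by
  have hle : (iterateFrobenius N p k).fieldRange ≤ (algebraMap M N).fieldRange := by
    rintro _ ⟨x, rfl⟩
    exact hN x
  refine ⟨(algebraMap M N).rangeRestrictFieldEquiv.symm.toRingHom.comp
    ((Subfield.inclusion hle).comp (iterateFrobenius N p k).rangeRestrictField), ?_⟩
  ext x
  simp only [RingHom.comp_apply, RingEquiv.toRingHom_eq_coe, RingEquiv.coe_toRingHom,
    RingHom.rangeRestrictFieldEquiv_apply_symm_apply]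
  rfl

/-- Let `K` be semi-perfect of characteristic `p` with `[K : K^p] = c`, let `L/K` be
algebraic, and `M/L` of degree at most `d`. Then any extension `N` of `M` all of whose
elements have their `q`-th power in `M` (in particular `N = M^{1/q}`) has degree at most
`d·c^k` over `L`, where `q = p^k`. -/
theorem stmt16 (p k d : ℕ) [Fact p.Prime]
    (K L M N : Type*) [Field K] [Field L] [Field M] [Field N] [CharP K p]
    [Algebra K L] [Algebra L M] [Algebra M N] [Algebra L N] [IsScalarTower L M N]
    [Algebra.IsAlgebraic K L]
    (c : ℕ) (hc : Module.rank (frobenius K p).fieldRange K = c)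
    (hd : Module.rank L M ≤ d)
    (hN : ∀ x : N, ∃ m : M, algebraMap M N m = x ^ p ^ k) :
    Module.rank L N ≤ ((d * c ^ k : ℕ) : Cardinal) := by
  have : CharP L p := charP_of_injective_algebraMap (algebraMap K L).injective p
  have : CharP N p := charP_of_injective_algebraMap (algebraMap L N).injective p
  obtain ⟨F, hF⟩ := exists_algebraMap_comp_eq_iterateFrobenius (M := M) p k hN
  have hFL : F.comp (algebraMap L N) = (algebraMap L M).comp (iterateFrobenius L p k) := by
    ext l
    apply (algebraMap M N).injective
    change (algebraMap M N).comp F (algebraMap L N l) =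
      algebraMap M N (algebraMap L M (l ^ p ^ k))
    rw [hF, iterateFrobenius_def, ← IsScalarTower.algebraMap_apply, map_pow]
  set Lq := (iterateFrobenius L p k).fieldRange
  have hLq : Module.rank Lq L ≤ ((c ^ k : ℕ) : Cardinal) := by
    rw [← Subfield.relrank_top_right, Subfield.relrank_iterateFrobenius_fieldRange,
      Subfield.relrank_top_right, Nat.cast_pow]
    exact pow_le_pow_left' (rank_frobenius_fieldRange_le_of_isAlgebraic p K L hc) k
  have hM : Module.rank Lq M ≤ ((d * c ^ k : ℕ) : Cardinal) := by
    rw [← lift_le_nat_iff, ← lift_rank_mul_lift_rank _ L M, Nat.cast_mul, mul_comm]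
    exact mul_le_mul' (lift_le_nat_iff.mpr hd) (lift_le_nat_iff.mpr hLq)
  have hrank := (lift_rank_le_lift_rank_fieldRange F _ hFL).trans (lift_le.mpr hM)
  rwa [lift_natCast, lift_le_nat_iff] at hrank
end

section
/- Let K be a field, f ∈ K[x_1, …, x_n] a homogeneous form of degree d ≥ 2, and L/K a field extension of finite degree e. If f can be written over L as a sum of s products g_i·h_i with g_i, h_i homogeneous of degrees strictly between 0 and d, then f can be written over K as a sum of at most e·s such products. In other words, str_K(f) ≤ e · str_L(f). -/
/-!
Fix a `K`-basis `(b_j)` of `L` and a `K`-linear retraction `π : L → K` of the inclusion. Expanding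
`g_i = ∑_j b_j G_{ij}` with `G_{ij}` over `K` and applying `π` coefficientwise to
`f = ∑_i g_i h_i` gives `f = ∑_{i,j} G_{ij} · π(b_j h_i)`, since `π` is `K[x]`-linear.
Both factors stay homogeneous of the original degrees, so there are `e·s` products.
-/

open MvPolynomial

namespace MvPolynomial

variable {R A σ : Type*} [CommSemiring R] [CommSemiring A] [Algebra R A]

noncomputable def mapCoeffs (φ : A →ₗ[R] R) : MvPolynomial σ A →ₗ[R] MvPolynomial σ R where
  toFun p := AddMonoidAlgebra.map φ.toAddMonoidHom p
  map_add' := AddMonoidAlgebra.map_add _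
  map_smul' c p := by ext; simp

@[simp]
theorem coeff_mapCoeffs (φ : A →ₗ[R] R) (p : MvPolynomial σ A) (m : σ →₀ ℕ) :
    coeff m (mapCoeffs φ p) = φ (coeff m p) := rfl

theorem IsHomogeneous.mapCoeffs {p : MvPolynomial σ A} {n : ℕ} (hp : p.IsHomogeneous n)
    (φ : A →ₗ[R] R) : (mapCoeffs φ p).IsHomogeneous n := fun m hm ↦
  hp fun h0 ↦ hm (by rw [coeff_mapCoeffs, h0, map_zero])

theorem mapCoeffs_map_mul (φ : A →ₗ[R] R) (q : MvPolynomial σ R) (p : MvPolynomial σ A) :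
    mapCoeffs φ (map (algebraMap R A) q * p) = q * mapCoeffs φ p := by
  classical
  ext m
  simp only [coeff_mapCoeffs, coeff_mul, map_sum, coeff_map, ← Algebra.smul_def, map_smul,
    smul_eq_mul]

theorem mapCoeffs_map {φ : A →ₗ[R] R} (hφ : ∀ c, φ (algebraMap R A c) = c)
    (q : MvPolynomial σ R) : mapCoeffs φ (map (algebraMap R A) q) = q := by
  ext m
  rw [coeff_mapCoeffs, coeff_map, hφ]

theorem sum_map_mapCoeffs_coord_mul_C {ι : Type*} [Fintype ι] (B : Module.Basis ι R A)
    (p : MvPolynomial σ A) :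
    ∑ j, map (algebraMap R A) (mapCoeffs (B.coord j) p) * C (B j) = p := by
  ext m
  simp only [coeff_sum, mul_comm _ (C _), coeff_C_mul, coeff_map, coeff_mapCoeffs,
    Module.Basis.coord_apply, ← Algebra.commutes, ← Algebra.smul_def]
  exact B.sum_repr (coeff m p)

theorem eq_sum_mapCoeffs_mul_of_map_eq_sum {ι κ : Type*} [Fintype ι] [Fintype κ]
    (B : Module.Basis ι R A) {π : A →ₗ[R] R} (hπ : ∀ c, π (algebraMap R A c) = c)
    {f : MvPolynomial σ R} {g h : κ → MvPolynomial σ A}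
    (hf : map (algebraMap R A) f = ∑ i, g i * h i) :
    f = ∑ x : ι × κ, mapCoeffs (B.coord x.1) (g x.2) * mapCoeffs π (C (B x.1) * h x.2) := by
  conv_lhs => rw [← mapCoeffs_map hπ f, hf]
  simp_rw [Fintype.sum_prod_type_right, ← mapCoeffs_map_mul, ← map_sum, ← mul_assoc,
    ← Finset.sum_mul, sum_map_mapCoeffs_coord_mul_C]

end MvPolynomial

theorem stmt17_general (K L : Type*) [Field K] [Field L] [Algebra K L]
    (e : ℕ) [FiniteDimensional K L] (he : Module.finrank K L = e)
    (n d s : ℕ) (f : MvPolynomial (Fin n) K)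
    (g h : Fin s → MvPolynomial (Fin n) L) (a : Fin s → ℕ)
    (ha : ∀ i, 0 < a i ∧ a i < d)
    (hg : ∀ i, (g i).IsHomogeneous (a i)) (hh : ∀ i, (h i).IsHomogeneous (d - a i))
    (hsum : MvPolynomial.map (algebraMap K L) f = ∑ i, g i * h i) :
    ∃ (g' h' : Fin (e * s) → MvPolynomial (Fin n) K) (b : Fin (e * s) → ℕ),
      (∀ i, 0 < b i ∧ b i < d) ∧ (∀ i, (g' i).IsHomogeneous (b i)) ∧
      (∀ i, (h' i).IsHomogeneous (d - b i)) ∧ f = ∑ i, g' i * h' i := by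
  let B := (Module.finBasis K L).reindex (finCongr he)
  let π := (Algebra.linearMap K L).leftInverse
  have hπ : ∀ c, π (algebraMap K L c) = c :=
    LinearMap.leftInverse_apply_of_inj (LinearMap.ker_eq_bot.mpr (algebraMap K L).injective)
  let κ : Fin (e * s) ≃ Fin e × Fin s := finProdFinEquiv.symm
  refine ⟨fun k ↦ mapCoeffs (B.coord (κ k).1) (g (κ k).2),
    fun k ↦ mapCoeffs π (C (B (κ k).1) * h (κ k).2), fun k ↦ a (κ k).2, fun k ↦ ha _,
    fun k ↦ (hg _).mapCoeffs _, fun k ↦ ?_, ?_⟩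
  · simpa using ((isHomogeneous_C _ _).mul (hh _)).mapCoeffs π
  · exact (eq_sum_mapCoeffs_mul_of_map_eq_sum B hπ hsum).trans (κ.sum_comp _).symm

/-- If a degree-`d` form `f` over `K` has strength at most `s` over a degree-`e` extension
`L`, then `f` has strength at most `e·s` over `K`: `str_K(f) ≤ e · str_L(f)`. -/
theorem stmt17 (K L : Type*) [Field K] [Field L] [Algebra K L]
    (e : ℕ) [FiniteDimensional K L] (he : Module.finrank K L = e)
    (n d s : ℕ) (hd : 2 ≤ d) (f : MvPolynomial (Fin n) K) (hf : f.IsHomogeneous d)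
    (g h : Fin s → MvPolynomial (Fin n) L) (a : Fin s → ℕ)
    (ha : ∀ i, 0 < a i ∧ a i < d)
    (hg : ∀ i, (g i).IsHomogeneous (a i)) (hh : ∀ i, (h i).IsHomogeneous (d - a i))
    (hsum : MvPolynomial.map (algebraMap K L) f = ∑ i, g i * h i) :
    ∃ (g' h' : Fin (e * s) → MvPolynomial (Fin n) K) (b : Fin (e * s) → ℕ),
      (∀ i, 0 < b i ∧ b i < d) ∧ (∀ i, (g' i).IsHomogeneous (b i)) ∧
      (∀ i, (h' i).IsHomogeneous (d - b i)) ∧ f = ∑ i, g' i * h' i :=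
  stmt17_general K L e he n d s f g h a ha hg hh hsum
end

section
/- Let A → B be a module-finite injective homomorphism of integral domains of characteristic p > 0, with fraction fields L = Frac(A) and M = Frac(B). Let L' be the separable closure of L in M. Then there exists a power q of p such that M^q ⊆ L', and setting A' = A·B^q (the subring of B generated by A and q-th powers of elements of B), the inclusion A' ⊆ B is an F-equivalence and Frac(A') = L'. -/
/-!
Since `B` is module-finite over `A`, the extension `M / L` is finite, so `M` is a finite purely
inseparable extension of `L'` and therefore has a finite exponent: `x ^ q ∈ L'` for all `x : M`,
for some power `q` of `p`. The ring `A' = A[B^q]` then sits between `A` and `B ∩ L'`, so its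
fraction field `K` lies between `L` and `L'`; conversely `K` contains `M^q`, so `M / K` is purely
inseparable, which forces `L' ⊆ K`.
-/

theorem IsFractionRing.map_mem_of_forall_map_algebraMap_mem {R K M : Type*} [CommRing R]
    [Field K] [Field M] [Algebra R K] [IsFractionRing R K] (f : K →+* M) {S : Subfield M}
    (h : ∀ r : R, f (algebraMap R K r) ∈ S) (x : K) : f x ∈ S := by
  obtain ⟨r, s, -, rfl⟩ := IsFractionRing.div_surjective R x
  rw [map_div₀]
  exact div_mem (h r) (h s)

theorem FiniteDimensional.of_isFractionRing (A B L M : Type*) [CommRing A] [CommRing B]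
    [Nontrivial A] [NoZeroDivisors B] [Algebra A B] [Module.Finite A B] [FaithfulSMul A B]
    [Field L] [Field M] [Algebra A L] [IsFractionRing A L]
    [Algebra B M] [IsFractionRing B M] [Algebra L M] [Algebra A M]
    [IsScalarTower A B M] [IsScalarTower A L M] : FiniteDimensional L M :=
  .of_isLocalization A B (nonZeroDivisors A)

section separableClosure

variable (L M : Type*) [Field L] [Field M] [Algebra L M] (p : ℕ) [ExpChar L p]

theorem separableClosure.exists_forall_pow_mem [FiniteDimensional L M] :
    ∃ k : ℕ, ∀ x : M, x ^ p ^ k ∈ separableClosure L M := by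
  refine ⟨IsPurelyInseparable.exponent (separableClosure L M) M, fun x ↦ ?_⟩
  obtain ⟨y, hy⟩ := IsPurelyInseparable.exponent_def' (separableClosure L M) p x
  exact hy ▸ y.2

variable {L M p} in
theorem separableClosure_le_of_forall_pow_mem {F : IntermediateField L M} {k : ℕ}
    (h : ∀ x : M, x ^ p ^ k ∈ F) : separableClosure L M ≤ F := by
  have : IsPurelyInseparable F M :=
    (isPurelyInseparable_iff_pow_mem F p).mpr fun x ↦ ⟨k, ⟨_, h x⟩, rfl⟩
  exact separableClosure_le L M F

end separableClosure

theorem stmt18_general (p : ℕ) [Fact p.Prime] (A B : Type*) [CommRing A] [CommRing B]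
    [IsDomain A] [IsDomain B] [CharP A p] [Algebra A B] [Module.Finite A B]
    (L M : Type*) [Field L] [Field M] [Algebra A L] [IsFractionRing A L]
    [Algebra B M] [IsFractionRing B M] [Algebra L M] [Algebra A M]
    [IsScalarTower A B M] [IsScalarTower A L M] :
    ∃ k : ℕ,
      (∀ x : M, x ^ p ^ k ∈ separableClosure L M) ∧
      (∀ b : B, ∃ m : ℕ,
        b ^ p ^ m ∈ Algebra.adjoin A (Set.range fun b' : B => b' ^ p ^ k)) ∧
      Subfield.closure
          (algebraMap B M ''
            ((Algebra.adjoin A (Set.range fun b' : B => b' ^ p ^ k) : Subalgebra A B) : Set B))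
        = (separableClosure L M).toSubfield := by
  have : CharP L p := charP_of_injective_algebraMap (IsFractionRing.injective A L) p
  have : CharP M p := charP_of_injective_algebraMap (algebraMap L M).injective p
  have : FaithfulSMul A M := .trans A L M
  have : FaithfulSMul A B := .tower_bot A B M
  have := FiniteDimensional.of_isFractionRing A B L M
  obtain ⟨k, hk⟩ := separableClosure.exists_forall_pow_mem L M p
  set A' := Algebra.adjoin A (Set.range fun b : B => b ^ p ^ k)
  set K := Subfield.closure (algebraMap B M '' (A' : Set B))
  have hA'K : ∀ b ∈ A', algebraMap B M b ∈ K := fun b hb ↦ Subfield.subset_closure ⟨b, hb, rfl⟩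
  refine ⟨k, hk, fun b ↦ ⟨k, Algebra.subset_adjoin ⟨b, rfl⟩⟩, le_antisymm ?_ ?_⟩
  · have hA' : A' ≤ ((separableClosure L M).toSubalgebra.restrictScalars A).comap
        (IsScalarTower.toAlgHom A B M) :=
      Algebra.adjoin_le <| by rintro _ ⟨b, rfl⟩; simpa using hk (algebraMap B M b)
    rw [Subfield.closure_le]
    rintro _ ⟨b, hb, rfl⟩
    exact hA' hb
  · have hLK (l : L) : algebraMap L M l ∈ K :=
      IsFractionRing.map_mem_of_forall_map_algebraMap_mem (R := A) (algebraMap L M) (fun a ↦ by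
        rw [← IsScalarTower.algebraMap_apply, IsScalarTower.algebraMap_apply A B M]
        exact hA'K _ (A'.algebraMap_mem a)) l
    have hpowK (b : B) : iterateFrobenius M p k (algebraMap B M b) ∈ K := by
      rw [iterateFrobenius_def, ← map_pow]
      exact hA'K _ (Algebra.subset_adjoin ⟨b, rfl⟩)
    exact separableClosure_le_of_forall_pow_mem (F := K.toIntermediateField hLK)
      (IsFractionRing.map_mem_of_forall_map_algebraMap_mem _ hpowK)

/-- Let `A ⊆ B` be a module-finite inclusion of domains of characteristic `p`, with fraction
fields `L`, `M`, and let `L'` be the separable closure of `L` in `M`. Then there is a power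
`q = p^k` with `M^q ⊆ L'`, and the subring `A' = A·B^q` of `B` satisfies: the inclusion
`A' ⊆ B` is an `F`-equivalence, and `Frac(A') = L'`. -/
theorem stmt18 (p : ℕ) [Fact p.Prime] (A B : Type*) [CommRing A] [CommRing B]
    [IsDomain A] [IsDomain B] [CharP A p] [Algebra A B] [Module.Finite A B]
    (hinj : Function.Injective (algebraMap A B))
    (L M : Type*) [Field L] [Field M] [Algebra A L] [IsFractionRing A L]
    [Algebra B M] [IsFractionRing B M] [Algebra L M] [Algebra A M]
    [IsScalarTower A B M] [IsScalarTower A L M] :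
    ∃ k : ℕ,
      (∀ x : M, x ^ p ^ k ∈ separableClosure L M) ∧
      (∀ b : B, ∃ m : ℕ,
        b ^ p ^ m ∈ Algebra.adjoin A (Set.range fun b' : B => b' ^ p ^ k)) ∧
      Subfield.closure
          (algebraMap B M ''
            ((Algebra.adjoin A (Set.range fun b' : B => b' ^ p ^ k) : Subalgebra A B) : Set B))
        = (separableClosure L M).toSubfield :=
  stmt18_general p A B L M
end

section
/- Let p be a prime and consider the field K = F_p(t_1, t_2, …) of rational functions in the variables t_i. For each n, the polynomial f = t_1 x_1^p + ⋯ + t_n x_n^p ∈ K[x_1, …, x_n] has strength 1 over the algebraic closure of K (i.e., it factors as g·h with g, h homogeneous of positive degrees less than p, namely as a product of a linear form and its (p−1)-st power after extracting p-th roots of the t_i), while any expression f = Σ_{i=1}^s g_i h_i over K with g_i, h_i homogeneous of degrees strictly between 0 and p requires s ≥ n/2. -/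
/-!
Over the algebraic closure, choose `cᵢ` with `cᵢ ^ p = tᵢ`; since the characteristic is `p`,
`f = (c₁ x₁ + ⋯ + cₙ xₙ) ^ p`.

Over `K`, let `I` be the ideal generated by the `gᵢ` and `hᵢ` of a decomposition
`f = ∑ gᵢ hᵢ`. After clearing denominators, apply `∂/∂tⱼ` to the coefficients: it sends `f` to
`xⱼ ^ p` and each `gᵢ hᵢ` into `I`, so `xⱼ ^ p ∈ I` for every `j`. Since the `gᵢ, hᵢ` have no
constant term, the ideal `(x₁, …, xₙ)` is then a minimal prime over `I`. It has height `n`, while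
Krull's height theorem bounds its height by the number `2s` of generators of `I`.
-/

open MvPolynomial

/-- The field `K = 𝔽_p(t₁, t₂, …)` of rational functions in countably many variables. -/
noncomputable abbrev RatFuncField (p : ℕ) : Type :=
  FractionRing (MvPolynomial ℕ (ZMod p))

/-- The form `f = t₁ x₁^p + ⋯ + t_n x_n^p` over `𝔽_p(t₁, t₂, …)`. -/
noncomputable def diagForm (p : ℕ) [Fact p.Prime] (n : ℕ) :
    MvPolynomial (Fin n) (RatFuncField p) :=
  ∑ i : Fin n,
    C (algebraMap (MvPolynomial ℕ (ZMod p)) (RatFuncField p) (X (i : ℕ))) * X i ^ p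

theorem Derivation.apply_sum_mul_mem_span {R A ι : Type*} [CommSemiring R] [CommRing A]
    [Algebra R A] [Fintype ι] (D : Derivation R A A) (g h : ι → A) :
    D (∑ i, g i * h i) ∈ Ideal.span (Set.range g ∪ Set.range h) := by
  have hg (i : ι) : g i ∈ Ideal.span (Set.range g ∪ Set.range h) :=
    Ideal.subset_span (Or.inl ⟨i, rfl⟩)
  have hh (i : ι) : h i ∈ Ideal.span (Set.range g ∪ Set.range h) :=
    Ideal.subset_span (Or.inr ⟨i, rfl⟩)
  rw [map_sum]
  refine Ideal.sum_mem _ fun i _ => ?_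
  rw [Derivation.leibniz, smul_eq_mul, smul_eq_mul]
  exact Ideal.add_mem _ (Ideal.mul_mem_right _ _ (hg i)) (Ideal.mul_mem_right _ _ (hh i))

namespace MvPolynomial

section Height

variable {K : Type*} [Field K]

theorem height_eq_of_isMaximal :
    ∀ (n : ℕ) (M : Ideal (MvPolynomial (Fin n) K)) [M.IsMaximal], M.height = n
  | 0, M, _ => by
    have := Ideal.height_le_ringKrullDim_of_ne_top (Ideal.IsPrime.ne_top' (I := M))
    rw [ringKrullDim_of_isNoetherianRing, ringKrullDim_eq_zero_of_field] at this
    simp only [Nat.card_eq_fintype_card, Fintype.card_fin, CharP.cast_eq_zero, add_zero] at this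
    exact nonpos_iff_eq_zero.mp (mod_cast this)
  | n + 1, M, _ => by
    let e := (finSuccEquiv K n).toRingEquiv
    let P := M.map e
    have : P.IsMaximal := Ideal.map_isMaximal_of_equiv e
    let Q := P.comap (Polynomial.C)
    have : Q.IsMaximal := Polynomial.isMaximal_comap_C_of_isJacobsonRing P
    have : P.LiesOver Q := ⟨rfl⟩
    rw [← e.height_map, Polynomial.height_eq_height_add_one Q P,
      height_eq_of_isMaximal n Q]
    norm_cast

theorem le_card_of_X_mem_radical_span {n : ℕ}
    (s : Finset (MvPolynomial (Fin n) K)) (hs : ∀ q ∈ s, constantCoeff q = 0)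
    (hX : ∀ j, X j ∈ (Ideal.span (s : Set (MvPolynomial (Fin n) K))).radical) :
    n ≤ s.card := by
  let m := RingHom.ker (constantCoeff : MvPolynomial (Fin n) K →+* K)
  have : m.IsMaximal := RingHom.ker_isMaximal_of_surjective _ fun a => ⟨C a, constantCoeff_C _ _⟩
  have hm : m ≤ Ideal.span (Set.range X) := fun x hx => by
    rw [← Set.image_univ, mem_ideal_span_X_image]
    intro μ hμ
    have hμ0 : μ ≠ 0 := by
      rintro rfl
      exact mem_support_iff.mp hμ (by simpa [m, constantCoeff_eq] using hx)
    obtain ⟨i, hi⟩ := Finsupp.ne_iff.mp hμ0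
    exact ⟨i, Set.mem_univ i, hi⟩
  have hmin : m ∈ (Ideal.span (s : Set (MvPolynomial (Fin n) K))).minimalPrimes := by
    refine ⟨⟨inferInstance, Ideal.span_le.mpr hs⟩, fun q ⟨hq, hsq⟩ _ => hm.trans ?_⟩
    rw [Ideal.span_le, Set.range_subset_iff]
    exact fun j => hq.radical_le_iff.mpr hsq (hX j)
  have := Ideal.height_le_card_of_mem_minimalPrimes_span_finset hmin
  rwa [height_eq_of_isMaximal, Nat.cast_le] at this

end Height

theorem IsHomogeneous.constantCoeff_eq_zero {σ R : Type*} [CommSemiring R]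
    {φ : MvPolynomial σ R} {n : ℕ} (hφ : φ.IsHomogeneous n) (hn : n ≠ 0) :
    constantCoeff φ = 0 := by
  rw [constantCoeff_eq]
  exact hφ.coeff_eq_zero (by simpa using hn.symm)

section Coefficients

variable {R σ τ : Type*} [CommSemiring R]

noncomputable def pderivCoeff (j : τ) :
    Derivation R (MvPolynomial σ (MvPolynomial τ R)) (MvPolynomial σ (MvPolynomial τ R)) where
  toLinearMap := (sumAlgEquiv R σ τ).toLinearMap ∘ₗ (pderiv (Sum.inr j)).toLinearMap ∘ₗ
    (sumAlgEquiv R σ τ).symm.toLinearMap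
  map_one_eq_zero' := by simp
  leibniz' a b := by simp [smul_eq_mul]

theorem pderivCoeff_apply (j : τ) (q : MvPolynomial σ (MvPolynomial τ R)) :
    pderivCoeff j q = sumAlgEquiv R σ τ (pderiv (Sum.inr j) ((sumAlgEquiv R σ τ).symm q)) :=
  rfl

theorem pderivCoeff_C (j : τ) (r : MvPolynomial τ R) :
    pderivCoeff (σ := σ) j (C r) = C (pderiv j r) := by
  have h (r : MvPolynomial τ R) : (sumAlgEquiv R σ τ).symm (C r) = rename Sum.inr r := by
    rw [AlgEquiv.symm_apply_eq]
    exact (AlgHom.congr_fun (sumAlgEquiv_comp_rename_inr R σ τ) r).symm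
  rw [pderivCoeff_apply, h, pderiv_rename Sum.inr_injective, ← h, AlgEquiv.apply_symm_apply]

theorem pderivCoeff_X (j : τ) (i : σ) : pderivCoeff (R := R) j (X i : MvPolynomial σ _) = 0 := by
  rw [pderivCoeff_apply, sumAlgEquiv_symm_X, pderiv_X_of_ne Sum.inl_ne_inr, map_zero]

theorem pderivCoeff_diagonal (p n : ℕ) (j : Fin n) :
    pderivCoeff (j : ℕ) (∑ i : Fin n, C (X (i : ℕ)) * X i ^ p :
      MvPolynomial (Fin n) (MvPolynomial ℕ R)) = X j ^ p := by
  simp [Derivation.leibniz_pow, pderivCoeff_C, pderivCoeff_X, pderiv_X, Pi.single_apply,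
    Fin.val_inj]

end Coefficients

attribute [local instance] algebraMvPolynomial in
theorem exists_map_eq_C_mul {R S σ ι : Type*} [CommRing R] [CommRing S]
    [Algebra R S] (M : Submonoid R) [IsLocalization M S] [Finite ι] (q : ι → MvPolynomial σ S) :
    ∃ d ∈ M, ∃ Q : ι → MvPolynomial σ R,
      ∀ i, map (algebraMap R S) (Q i) = C (algebraMap R S d) * q i := by
  obtain ⟨⟨_, d, hd, rfl⟩, hQ⟩ :=
    IsLocalization.exist_integer_multiples_of_finite (M.map (C (σ := σ))) q
  choose Q hQ using hQ
  exact ⟨d, hd, Q, fun i => by simpa only [Algebra.smul_def, algebraMap_def, map_C] using hQ i⟩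

end MvPolynomial

theorem pow_X_mem_span_of_diagForm_eq (p : ℕ) [Fact p.Prime] {n s : ℕ}
    (g h : Fin s → MvPolynomial (Fin n) (RatFuncField p))
    (hf : diagForm p n = ∑ i, g i * h i) (j : Fin n) :
    X j ^ p ∈ Ideal.span (Set.range g ∪ Set.range h) := by
  let φ := map (σ := Fin n) (algebraMap (MvPolynomial ℕ (ZMod p)) (RatFuncField p))
  set I := Ideal.span (Set.range g ∪ Set.range h)
  obtain ⟨d, hd, Q, hQ⟩ :=
    exists_map_eq_C_mul (nonZeroDivisors (MvPolynomial ℕ (ZMod p))) (Sum.elim g h)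
  let F : MvPolynomial (Fin n) (MvPolynomial ℕ (ZMod p)) := ∑ i : Fin n, C (X (i : ℕ)) * X i ^ p
  have hF : φ F = diagForm p n := by simp [F, φ, diagForm]
  have hFQ : C (d ^ 2) * F = ∑ i, Q (.inl i) * Q (.inr i) := by
    refine map_injective _ (IsFractionRing.injective _ (RatFuncField p)) ?_
    simp only [map_mul, map_sum, hQ, Sum.elim_inl, Sum.elim_inr, map_C, map_pow]
    rw [show map _ F = diagForm p n from hF, hf, Finset.mul_sum]
    exact Finset.sum_congr rfl fun i _ => by ring
  have hQI : Ideal.span (Set.range (Q ∘ .inl) ∪ Set.range (Q ∘ .inr)) ≤ I.comap φ := by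
    refine Ideal.span_le.mpr ?_
    rintro _ (⟨i, rfl⟩ | ⟨i, rfl⟩) <;>
      · change φ (Q _) ∈ I
        rw [hQ]
        exact I.mul_mem_left _ (Ideal.subset_span (by simp))
  have hderiv := hQI ((pderivCoeff (j : ℕ)).apply_sum_mul_mem_span (Q ∘ .inl) (Q ∘ .inr))
  have hfI : diagForm p n ∈ I :=
    hf ▸ Ideal.sum_mem _ fun i _ => I.mul_mem_right _ (Ideal.subset_span (Or.inl ⟨i, rfl⟩))
  have hDF : pderivCoeff (j : ℕ) F = X j ^ p := pderivCoeff_diagonal p n j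
  simp only [Function.comp_apply, ← hFQ, Derivation.leibniz, hDF, pderivCoeff_C, smul_eq_mul,
    Ideal.mem_comap, map_add, map_mul, hF] at hderiv
  rw [show φ (X j ^ p) = X j ^ p by simp [φ]] at hderiv
  have hunit : IsUnit (φ (C (d ^ 2))) := by
    have := IsFractionRing.to_map_ne_zero_of_mem_nonZeroDivisors (K := RatFuncField p) hd
    simpa [φ] using this
  rw [← Ideal.unit_mul_mem_iff_mem I hunit]
  have := I.sub_mem hderiv (I.mul_mem_right (φ (C (pderiv (j : ℕ) (d ^ 2)))) hfI)
  rwa [add_sub_cancel_right] at this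

theorem exists_isHomogeneous_one_pow_eq_map_diagForm (p : ℕ) [Fact p.Prime] (n : ℕ) :
    ∃ ℓ : MvPolynomial (Fin n) (AlgebraicClosure (RatFuncField p)), ℓ.IsHomogeneous 1 ∧
      map (algebraMap (RatFuncField p) (AlgebraicClosure (RatFuncField p))) (diagForm p n) =
        ℓ ^ p := by
  choose c hc using fun i : Fin n => IsAlgClosed.exists_pow_nat_eq
    (algebraMap (RatFuncField p) (AlgebraicClosure (RatFuncField p))
      (algebraMap (MvPolynomial ℕ (ZMod p)) (RatFuncField p) (X (i : ℕ))))
    (Fact.out : p.Prime).pos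
  refine ⟨∑ i, C (c i) * X i, IsHomogeneous.sum _ _ _ fun i _ => isHomogeneous_C_mul_X _ _, ?_⟩
  simp only [sum_pow_char, mul_pow, ← C_pow, hc, diagForm, map_sum, map_mul, map_C, map_pow,
    map_X]

/-- Over `K = 𝔽_p(t₁, …)`, the form `f = t₁x₁^p + ⋯ + t_nx_n^p` has absolute strength `1`
(it factors over the algebraic closure into a product of two forms of positive degrees
`< p`), but any strength decomposition of `f` over `K` itself requires at least `n/2`
summands. -/
theorem stmt19 (p : ℕ) [Fact p.Prime] (n : ℕ) :
    (∃ (g h : MvPolynomial (Fin n) (AlgebraicClosure (RatFuncField p))) (a : ℕ),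
      0 < a ∧ a < p ∧ g.IsHomogeneous a ∧ h.IsHomogeneous (p - a) ∧
      MvPolynomial.map (algebraMap (RatFuncField p) (AlgebraicClosure (RatFuncField p)))
          (diagForm p n) = g * h) ∧
    (∀ (s : ℕ) (g h : Fin s → MvPolynomial (Fin n) (RatFuncField p)) (a : Fin s → ℕ),
      (∀ i, 0 < a i ∧ a i < p) → (∀ i, (g i).IsHomogeneous (a i)) →
      (∀ i, (h i).IsHomogeneous (p - a i)) →
      diagForm p n = ∑ i, g i * h i → n ≤ 2 * s) := by
  have hp : p.Prime := Fact.out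
  refine ⟨?_, fun s g h a ha hg hh hf => ?_⟩
  · obtain ⟨ℓ, hℓ, hfℓ⟩ := exists_isHomogeneous_one_pow_eq_map_diagForm p n
    refine ⟨ℓ, ℓ ^ (p - 1), 1, one_pos, hp.one_lt, hℓ, by simpa using hℓ.pow (p - 1), ?_⟩
    rw [hfℓ, ← pow_succ', Nat.sub_add_cancel hp.one_le]
  let gens := Finset.univ.image g ∪ Finset.univ.image h
  have hgens : (gens : Set _) = Set.range g ∪ Set.range h := by simp [gens]
  have hconst : ∀ q ∈ gens, constantCoeff q = 0 := by
    simp only [gens, Finset.mem_union, Finset.mem_image, Finset.mem_univ, true_and]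
    rintro _ (⟨i, rfl⟩ | ⟨i, rfl⟩)
    · exact (hg i).constantCoeff_eq_zero (ha i).1.ne'
    · exact (hh i).constantCoeff_eq_zero (Nat.sub_pos_of_lt (ha i).2).ne'
  have hX (j : Fin n) :
      X j ∈ (Ideal.span (gens : Set (MvPolynomial (Fin n) (RatFuncField p)))).radical := by
    rw [hgens]
    exact ⟨p, pow_X_mem_span_of_diagForm_eq p g h hf j⟩
  calc n ≤ gens.card := le_card_of_X_mem_radical_span gens hconst hX
    _ ≤ s + s := (Finset.card_union_le _ _).trans
        (add_le_add (Finset.card_image_le.trans_eq (by simp))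
          (Finset.card_image_le.trans_eq (by simp)))
    _ = 2 * s := (two_mul s).symm
end
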